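/- arXiv:2005.01055 — 5 statements merged into one kernel-verified Lean document; each statement's English description precedes it below -/
import Mathlib

section
/- For every fixed integer ℓ ≥ 1, the quantity B{m,ℓ} is asymptotically equivalent to π^m/m! as m → ∞; that is, the sequence m!·B{m,ℓ}/π^m = (m!/((ℓ−1)!·(m−ℓ)!·π^m))·∫₀^π (sin x)^{ℓ−1}·x^{m−ℓ} dx converges to 1 as m → ∞. (This asymptotic is used in the proof of Theorem 5.8.) -/
open intervalIntegral

/-- `bQ m ℓ` is the quantity `B{m,ℓ}`: for `1 ≤ ℓ ≤ m` it equals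
`(1/((ℓ-1)!(m-ℓ)!)) ∫₀^π (sin x)^{ℓ-1} x^{m-ℓ} dx`; moreover
`B{m,0} = π^m / m!` and `B{m,ℓ} = 0` for `ℓ > m`. -/
noncomputable def bQ (m ℓ : ℕ) : ℝ :=
  if ℓ = 0 then Real.pi ^ m / (Nat.factorial m : ℝ)
  else if ℓ ≤ m then
    (1 / ((Nat.factorial (ℓ - 1) : ℝ) * (Nat.factorial (m - ℓ) : ℝ))) *
      ∫ x in (0 : ℝ)..Real.pi, (Real.sin x) ^ (ℓ - 1) * x ^ (m - ℓ)
  else 0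

/-! Put `k = ℓ - 1` and `m = n + ℓ`. Then `m! B{m,ℓ} / π^m` is the ratio of
`∫₀^π sin^k x · x^n` to the Beta integral `J_k = ∫₀^π (π - x)^k x^n = k! n! π^m / m!`.
From `u - u³/6 ≤ sin u ≤ u` at `u = π - x` the ratio lies between `1 - (k/6) J_{k+2}/J_k`
and `1`, and the closed form gives `J_{k+2}/J_k = O(1/n²)`. -/

open Real Nat Filter Topology

theorem integral_sub_pow_mul_pow (a : ℝ) (k n : ℕ) :
    ∫ x in (0 : ℝ)..a, (a - x) ^ k * x ^ n = k ! * n ! / (k + n + 1)! * a ^ (k + n + 1) := by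
  induction k generalizing n with
  | zero =>
    simp only [pow_zero, one_mul, integral_pow, zero_add, factorial_zero, cast_one]
    rw [factorial_succ]
    push_cast
    field_simp
    ring
  | succ k ih =>
    have hu : ∀ x ∈ Set.uIcc 0 a,
        HasDerivAt (fun x => (a - x) ^ (k + 1)) (-((k + 1) * (a - x) ^ k)) x := fun x _ => by
      simpa using ((hasDerivAt_id x).const_sub a).fun_pow (k + 1)
    have hv : ∀ x ∈ Set.uIcc 0 a, HasDerivAt (fun x => x ^ (n + 1)) ((n + 1) * x ^ n) x :=
      fun x _ => by simpa using hasDerivAt_pow (n + 1) x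
    have ibp := integral_mul_deriv_eq_deriv_mul hu hv
      (Continuous.intervalIntegrable (by fun_prop) _ _)
      (Continuous.intervalIntegrable (by fun_prop) _ _)
    simp only [sub_self, zero_pow (succ_ne_zero _), zero_mul, mul_zero, sub_zero, neg_mul,
      integral_neg, sub_neg_eq_add, zero_add, mul_left_comm _ ((n : ℝ) + 1), integral_const_mul,
      mul_assoc, ih] at ibp
    rw [show k + (n + 1) + 1 = k + 1 + n + 1 by ring, factorial_succ n] at ibp
    rw [factorial_succ k]
    push_cast at ibp ⊢
    rw [← mul_right_inj' (by positivity : (n : ℝ) + 1 ≠ 0), ibp]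
    ring

theorem integral_sub_pow_mul_pow_pos {a : ℝ} (ha : 0 < a) (k n : ℕ) :
    0 < ∫ x in (0 : ℝ)..a, (a - x) ^ k * x ^ n := by
  rw [integral_sub_pow_mul_pow]
  positivity

theorem integral_sub_pow_add_two_div {a : ℝ} (ha : a ≠ 0) (k n : ℕ) :
    (∫ x in (0 : ℝ)..a, (a - x) ^ (k + 2) * x ^ n) / ∫ x in (0 : ℝ)..a, (a - x) ^ k * x ^ n
      = a ^ 2 * ((k + 1) * (k + 2)) / ((n + k + 2) * (n + k + 3)) := by
  simp only [integral_sub_pow_mul_pow]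
  rw [show k + 2 + n + 1 = k + n + 1 + 1 + 1 by ring, factorial_succ (k + n + 1 + 1),
    factorial_succ (k + n + 1), factorial_succ (k + 1), factorial_succ k]
  push_cast
  field_simp
  ring

theorem tendsto_integral_sub_pow_add_two_div {a : ℝ} (ha : a ≠ 0) (k : ℕ) :
    Tendsto (fun n : ℕ => (∫ x in (0 : ℝ)..a, (a - x) ^ (k + 2) * x ^ n) /
      ∫ x in (0 : ℝ)..a, (a - x) ^ k * x ^ n) atTop (𝓝 0) := by
  simp only [integral_sub_pow_add_two_div ha]
  refine tendsto_const_nhds.div_atTop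
    (tendsto_atTop_mono (fun n => ?_) tendsto_natCast_atTop_atTop)
  nlinarith [(n.cast_nonneg : (0 : ℝ) ≤ n), (k.cast_nonneg : (0 : ℝ) ≤ k)]

theorem pow_sub_le_sin_pow {u : ℝ} (hu₀ : 0 ≤ u) (huπ : u ≤ π) (k : ℕ) :
    u ^ k - k / 6 * u ^ (k + 2) ≤ sin u ^ k := by
  by_cases hu : u ^ 2 ≤ 6
  · have bernoulli := one_add_mul_le_pow (show -2 ≤ -(u ^ 2 / 6) by nlinarith) k
    calc u ^ k - k / 6 * u ^ (k + 2) = u ^ k * (1 + k * -(u ^ 2 / 6)) := by ring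
      _ ≤ u ^ k * (1 + -(u ^ 2 / 6)) ^ k := by gcongr
      _ = (u - u ^ 3 / 6) ^ k := by rw [← mul_pow]; ring
      _ ≤ sin u ^ k := pow_le_pow_left₀ (by nlinarith) (sin_ge_sub_cube hu₀) k
  · rcases k.eq_zero_or_pos with rfl | hk₀
    · simp
    have hk : (1 : ℝ) ≤ k := by exact_mod_cast hk₀
    calc u ^ k - k / 6 * u ^ (k + 2) = u ^ k * (1 - k * u ^ 2 / 6) := by ring
      _ ≤ 0 := mul_nonpos_of_nonneg_of_nonpos (by positivity) (by nlinarith)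
      _ ≤ sin u ^ k := pow_nonneg (sin_nonneg_of_nonneg_of_le_pi hu₀ huπ) k

theorem integral_sin_pow_mul_pow_le (k n : ℕ) :
    ∫ x in (0 : ℝ)..π, sin x ^ k * x ^ n ≤ ∫ x in (0 : ℝ)..π, (π - x) ^ k * x ^ n := by
  refine integral_mono_on pi_pos.le (Continuous.intervalIntegrable (by fun_prop) _ _)
    (Continuous.intervalIntegrable (by fun_prop) _ _) fun x hx => ?_
  have hsin : sin x ≤ π - x := by
    rw [← sin_pi_sub]
    exact sin_le (by linarith [hx.2])
  exact mul_le_mul_of_nonneg_right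
    (pow_le_pow_left₀ (sin_nonneg_of_nonneg_of_le_pi hx.1 hx.2) hsin k) (pow_nonneg hx.1 n)

theorem integral_pi_sub_pow_mul_pow_sub_le (k n : ℕ) :
    (∫ x in (0 : ℝ)..π, (π - x) ^ k * x ^ n)
        - k / 6 * ∫ x in (0 : ℝ)..π, (π - x) ^ (k + 2) * x ^ n
      ≤ ∫ x in (0 : ℝ)..π, sin x ^ k * x ^ n := by
  rw [← integral_const_mul, ← integral_sub (Continuous.intervalIntegrable (by fun_prop) _ _)
    (Continuous.intervalIntegrable (by fun_prop) _ _)]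
  refine integral_mono_on pi_pos.le (Continuous.intervalIntegrable (by fun_prop) _ _)
    (Continuous.intervalIntegrable (by fun_prop) _ _) fun x hx => ?_
  have h := pow_sub_le_sin_pow (sub_nonneg.2 hx.2) (by linarith [hx.1]) k
  rw [sin_pi_sub] at h
  calc (π - x) ^ k * x ^ n - k / 6 * ((π - x) ^ (k + 2) * x ^ n)
      = ((π - x) ^ k - k / 6 * (π - x) ^ (k + 2)) * x ^ n := by ring
    _ ≤ sin x ^ k * x ^ n := mul_le_mul_of_nonneg_right h (pow_nonneg hx.1 n)

theorem factorial_mul_bQ_div_pow (k n : ℕ) :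
    ((n + (k + 1))! : ℝ) * bQ (n + (k + 1)) (k + 1) / π ^ (n + (k + 1))
      = (∫ x in (0 : ℝ)..π, sin x ^ k * x ^ n) /
          ∫ x in (0 : ℝ)..π, (π - x) ^ k * x ^ n := by
  rw [bQ, if_neg (succ_ne_zero k), if_pos le_add_self, integral_sub_pow_mul_pow,
    Nat.add_sub_cancel, Nat.add_sub_cancel, show k + n + 1 = n + (k + 1) by ring]
  field_simp

/-- For every fixed integer `ℓ ≥ 1`, the quantity `B{m,ℓ}` is asymptotically
equivalent to `π^m / m!` as `m → ∞`; that is, `m! B{m,ℓ} / π^m → 1`. -/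
theorem bQ_asymptotic (ℓ : ℕ) (hℓ : 1 ≤ ℓ) :
    Filter.Tendsto
      (fun m : ℕ => (Nat.factorial m : ℝ) * bQ m ℓ / Real.pi ^ m)
      Filter.atTop (nhds 1) := by
  obtain ⟨k, rfl⟩ := Nat.exists_eq_add_of_le' hℓ
  rw [← tendsto_add_atTop_iff_nat (k + 1)]
  simp only [factorial_mul_bQ_div_pow]
  have hJ : ∀ n : ℕ, 0 < ∫ x in (0 : ℝ)..π, (π - x) ^ k * x ^ n :=
    integral_sub_pow_mul_pow_pos pi_pos k
  have lower := ((tendsto_integral_sub_pow_add_two_div pi_ne_zero k).const_mul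
    (k / 6 : ℝ)).const_sub 1
  rw [mul_zero, sub_zero] at lower
  refine tendsto_of_tendsto_of_tendsto_of_le_of_le lower tendsto_const_nhds (fun n => ?_)
    (fun n => (div_le_one (hJ n)).2 (integral_sin_pow_mul_pow_le k n))
  rw [le_div_iff₀ (hJ n), sub_mul, mul_assoc, div_mul_cancel₀ _ (hJ n).ne', one_mul]
  exact integral_pi_sub_pow_mul_pow_sub_le k n
end

section
/- For all integers n ≥ 1 and k ≥ 2 one has the recurrence B{n, k−2} − B{n, k} = (k−1)²·B{n+2, k} (equation (5.11) of the paper, where the stated conventions B{m,0} = π^m/m! and B{m,ℓ} = 0 for ℓ > m are in force). In particular, for 4 ≤ k ≤ n this is the integral identity (1/((k−3)!·(n−k+2)!))·∫₀^π (sin x)^{k−3}·x^{n−k+2} dx − (1/((k−1)!·(n−k)!))·∫₀^π (sin x)^{k−1}·x^{n−k} dx = ((k−1)²/((k−1)!·(n−k+2)!))·∫₀^π (sin x)^{k−1}·x^{n−k+2} dx. -/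
/-!
Everything comes from the one-dimensional Green identity
`∫ₐᵇ (f'' g - f g'') = [f' g - f g']ₐᵇ`, applied on `[0, π]` to `f = sin^m` and `g = x^n`.
As `(sin^(s+2))'' = (s+2)(s+1) sin^s - (s+2)² sin^(s+2)`, it becomes a three-term relation
between the moments `J(a, b) = ∫₀^π sin^a x · x^b dx`, with vanishing boundary term since
`sin 0 = sin π = 0`; only for `f = sin` does the boundary contribute, namely `π^n`. Since
`B{m,ℓ} = J(ℓ-1, m-ℓ) / ((ℓ-1)! (m-ℓ)!)`, dividing by factorials turns the first relation into
the recurrence for `3 ≤ k ≤ n + 2` (the exponents `n < 2` giving `k ∈ {n+1, n+2}`) and the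
second one into the case `k = 2`, where `B{n,0} = π^n / n!`; for `k > n + 2` all terms vanish.
-/

open intervalIntegral

open Real

theorem integral_deriv2_mul_sub_mul_deriv2 {f f' f'' g g' g'' : ℝ → ℝ} {a b : ℝ}
    (hf : ∀ x, HasDerivAt f (f' x) x) (hf' : ∀ x, HasDerivAt f' (f'' x) x)
    (hg : ∀ x, HasDerivAt g (g' x) x) (hg' : ∀ x, HasDerivAt g' (g'' x) x)
    (hf''_cont : Continuous f'') (hg''_cont : Continuous g'') :
    ∫ x in a..b, (f'' x * g x - f x * g'' x) =
      (f' b * g b - f b * g' b) - (f' a * g a - f a * g' a) := by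
  have hf_cont : Continuous f := continuous_iff_continuousAt.2 fun x => (hf x).continuousAt
  have hg_cont : Continuous g := continuous_iff_continuousAt.2 fun x => (hg x).continuousAt
  have h_cont : Continuous fun x => f'' x * g x - f x * g'' x := by fun_prop
  refine integral_eq_sub_of_hasDerivAt (f := fun x => f' x * g x - f x * g' x) (fun x _ => ?_)
    (h_cont.intervalIntegrable _ _)
  exact (((hf' x).fun_mul (hg x)).fun_sub ((hf x).fun_mul (hg' x))).congr_deriv (by ring)

noncomputable def sinMoment (a b : ℕ) : ℝ := ∫ x in (0 : ℝ)..π, sin x ^ a * x ^ b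

theorem hasDerivAt_sin_pow_add_two (s : ℕ) (x : ℝ) :
    HasDerivAt (fun y => sin y ^ (s + 2)) ((s + 2) * sin x ^ (s + 1) * cos x) x := by
  simpa [add_assoc, one_add_one_eq_two] using (hasDerivAt_sin x).fun_pow (s + 2)

theorem hasDerivAt_sin_pow_succ_mul_cos (s : ℕ) (x : ℝ) :
    HasDerivAt (fun y => (s + 2) * sin y ^ (s + 1) * cos y)
      ((s + 2) * (s + 1) * sin x ^ s - (s + 2) ^ 2 * sin x ^ (s + 2)) x := by
  refine ((((hasDerivAt_sin x).fun_pow (s + 1)).const_mul ((s : ℝ) + 2)).fun_mul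
    (hasDerivAt_cos x)).congr_deriv ?_
  push_cast
  linear_combination ((s : ℝ) + 2) * (s + 1) * sin x ^ s * cos_sq' x

theorem hasDerivAt_natCast_mul_pow_sub_one (n : ℕ) (x : ℝ) :
    HasDerivAt (fun y => (n : ℝ) * y ^ (n - 1))
      (((n * (n - 1) : ℕ) : ℝ) * x ^ (n - 2)) x := by
  refine ((hasDerivAt_pow (n - 1) x).const_mul (n : ℝ)).congr_deriv ?_
  rw [Nat.sub_sub, Nat.cast_mul]
  ring

/-- For `n < 2` the right side is `0`, so the truncated exponent `n - 2` is harmless. -/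
theorem sinMoment_sub_sinMoment_add_two (s n : ℕ) :
    (s + 2) * (s + 1) * sinMoment s n - (s + 2) ^ 2 * sinMoment (s + 2) n =
      ((n * (n - 1) : ℕ) : ℝ) * sinMoment (s + 2) (n - 2) := by
  have green := integral_deriv2_mul_sub_mul_deriv2 (a := 0) (b := π)
    (hasDerivAt_sin_pow_add_two s) (hasDerivAt_sin_pow_succ_mul_cos s)
    (hasDerivAt_pow n) (hasDerivAt_natCast_mul_pow_sub_one n) (by fun_prop) (by fun_prop)
  have integrand : ∀ x : ℝ,
      ((s + 2) * (s + 1) * sin x ^ s - (s + 2) ^ 2 * sin x ^ (s + 2)) * x ^ n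
        - sin x ^ (s + 2) * (((n * (n - 1) : ℕ) : ℝ) * x ^ (n - 2)) =
      (s + 2) * (s + 1) * (sin x ^ s * x ^ n) - (s + 2) ^ 2 * (sin x ^ (s + 2) * x ^ n)
        - ((n * (n - 1) : ℕ) : ℝ) * (sin x ^ (s + 2) * x ^ (n - 2)) := fun x => by ring
  simp only [integrand, sin_zero, sin_pi, zero_pow (Nat.succ_ne_zero _), mul_zero, zero_mul,
    sub_self] at green
  rw [integral_sub, integral_sub, integral_const_mul, integral_const_mul, integral_const_mul]
    at green
  · unfold sinMoment
    linarith
  all_goals exact Continuous.intervalIntegrable (by fun_prop) _ _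

theorem sinMoment_one_add_sinMoment_one_sub_two (n : ℕ) (hn : n ≠ 0) :
    sinMoment 1 n + ((n * (n - 1) : ℕ) : ℝ) * sinMoment 1 (n - 2) = π ^ n := by
  have green := integral_deriv2_mul_sub_mul_deriv2 (a := 0) (b := π)
    hasDerivAt_sin hasDerivAt_cos
    (hasDerivAt_pow n) (hasDerivAt_natCast_mul_pow_sub_one n) (by fun_prop) (by fun_prop)
  have integrand : ∀ x : ℝ,
      -sin x * x ^ n - sin x * (((n * (n - 1) : ℕ) : ℝ) * x ^ (n - 2)) =
      -(sin x * x ^ n) - ((n * (n - 1) : ℕ) : ℝ) * (sin x * x ^ (n - 2)) := fun x => by ring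
  simp only [integrand, sin_zero, sin_pi, cos_zero, cos_pi, zero_pow hn] at green
  rw [integral_sub, integral_neg, integral_const_mul] at green
  · simp only [sinMoment, pow_one]
    linarith
  all_goals exact Continuous.intervalIntegrable (by fun_prop) _ _

open Nat in
theorem one_div_factorial_mul_sinMoment_sub (a b : ℕ) :
    1 / (a ! * (b + 2)! : ℝ) * sinMoment a (b + 2)
        - 1 / ((a + 2)! * b ! : ℝ) * sinMoment (a + 2) b =
      ((a : ℝ) + 2) ^ 2 / ((a + 2)! * (b + 2)! : ℝ) * sinMoment (a + 2) (b + 2) := by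
  have h := sinMoment_sub_sinMoment_add_two a (b + 2)
  simp only [Nat.add_sub_cancel, show b + 2 - 1 = b + 1 by omega] at h
  push_cast [Nat.factorial_succ] at h ⊢
  field_simp
  linear_combination h

open Nat in
theorem bQ_add_add_one (a b : ℕ) :
    bQ (a + b + 1) (a + 1) = 1 / (a ! * b ! : ℝ) * sinMoment a b := by
  simp [bQ, sinMoment]

theorem bQ_of_lt {m ℓ : ℕ} (h : m < ℓ) : bQ m ℓ = 0 := by
  simp [bQ, h.not_ge, (m.zero_le.trans_lt h).ne']

theorem bQ_zero_sub_bQ_two {n : ℕ} (hn : 1 ≤ n) : bQ n 0 - bQ n 2 = bQ (n + 2) 2 := by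
  have h := sinMoment_one_add_sinMoment_one_sub_two n (by omega)
  have h0 : bQ n 0 = π ^ n / n.factorial := by simp [bQ]
  obtain rfl | ⟨q, rfl⟩ : n = 1 ∨ ∃ q, n = q + 2 :=
    hn.eq_or_lt.imp Eq.symm fun h => ⟨n - 2, by omega⟩
  · rw [h0, bQ_of_lt (by norm_num), show (1 + 2 : ℕ) = 1 + 1 + 1 from rfl, bQ_add_add_one]
    norm_num at h ⊢
    linarith
  · rw [h0, show q + 2 = 1 + q + 1 by ring, bQ_add_add_one,
      show 1 + q + 1 + 2 = 1 + (q + 2) + 1 by ring, bQ_add_add_one]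
    simp only [show 1 + q + 1 = q + 2 by ring, Nat.add_sub_cancel,
      show q + 2 - 1 = q + 1 by omega] at h ⊢
    push_cast [Nat.factorial_succ] at h ⊢
    rw [← h]
    field_simp
    ring

theorem bQ_sub_bQ_add_two (s r : ℕ) :
    bQ (s + r + 1) (s + 1) - bQ (s + r + 1) (s + 3) =
      ((s : ℝ) + 2) ^ 2 * bQ (s + r + 3) (s + 3) := by
  rw [bQ_add_add_one, show s + r + 3 = s + 2 + r + 1 by ring, bQ_add_add_one]
  obtain hr | ⟨q, rfl⟩ : r < 2 ∨ ∃ q, r = q + 2 :=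
    (lt_or_ge r 2).imp_right fun hr => ⟨r - 2, by omega⟩
  · have h := sinMoment_sub_sinMoment_add_two s r
    rw [show r * (r - 1) = 0 by interval_cases r <;> rfl] at h
    rw [bQ_of_lt (by omega)]
    push_cast [Nat.factorial_succ] at h ⊢
    field_simp
    linear_combination h
  · rw [show s + (q + 2) + 1 = s + 2 + q + 1 by ring, bQ_add_add_one]
    linear_combination one_div_factorial_mul_sinMoment_sub s q

/-- For all integers `n ≥ 1` and `k ≥ 2` one has the recurrence
`B{n,k-2} - B{n,k} = (k-1)² B{n+2,k}`; in particular, for `4 ≤ k ≤ n` this is the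
corresponding integral identity. -/
theorem bQ_recurrence (n k : ℕ) (hn : 1 ≤ n) (hk : 2 ≤ k) :
    bQ n (k - 2) - bQ n k = ((k : ℝ) - 1) ^ 2 * bQ (n + 2) k ∧
    (4 ≤ k → k ≤ n →
      (1 / ((Nat.factorial (k - 3) : ℝ) * (Nat.factorial (n - k + 2) : ℝ))) *
          (∫ x in (0 : ℝ)..Real.pi, (Real.sin x) ^ (k - 3) * x ^ (n - k + 2))
        - (1 / ((Nat.factorial (k - 1) : ℝ) * (Nat.factorial (n - k) : ℝ))) *
          (∫ x in (0 : ℝ)..Real.pi, (Real.sin x) ^ (k - 1) * x ^ (n - k))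
      = (((k : ℝ) - 1) ^ 2 / ((Nat.factorial (k - 1) : ℝ) * (Nat.factorial (n - k + 2) : ℝ))) *
          ∫ x in (0 : ℝ)..Real.pi, (Real.sin x) ^ (k - 1) * x ^ (n - k + 2)) := by
  refine ⟨?_, fun hk4 _ => ?_⟩
  · obtain ⟨j, rfl⟩ := Nat.exists_eq_add_of_le' hk
    rcases j with _ | s
    · norm_num [bQ_zero_sub_bQ_two hn]
    rcases lt_or_ge n (s + 1) with hlt | hle
    · rw [bQ_of_lt (by omega), bQ_of_lt (by omega), bQ_of_lt (by omega)]
      ring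
    obtain ⟨r, rfl⟩ : ∃ r, n = s + r + 1 := ⟨n - (s + 1), by omega⟩
    convert bQ_sub_bQ_add_two s r using 3
    · omega
    · push_cast
      ring
  · have h := one_div_factorial_mul_sinMoment_sub (k - 3) (n - k)
    have hcoef : ((k - 3 : ℕ) : ℝ) + 2 = k - 1 := by
      rw [Nat.cast_sub (by omega)]
      ring
    rw [show k - 3 + 2 = k - 1 by omega, hcoef] at h
    exact h
end

section
/- For every integer n ≥ 2 one has the identity (n!/(2π^n))·( B{n,2} + π·B{n+1,2} + 3·B{n+2,2} ) = 1/2 + (n!/(2π^n))·( ∑_{k ∈ {0,…,n}, n−k even} (−1)^{(n−k)/2}·(k+2)·π^k/k! + 2·(−1)^{n/2}·𝟙{n is even} + π·(−1)^{(n−1)/2}·𝟙{n is odd} ). Written out via the integral definition of B, the left-hand side equals (n!/(2π^n))·( (1/(n−2)!)·∫₀^π x^{n−2}·sin x dx + (π/(n−1)!)·∫₀^π x^{n−1}·sin x dx + (3/n!)·∫₀^π x^{n}·sin x dx ). (In the paper this quantity is the expected statistical dimension E δ(W̆_{n,2}) of the cone over the weighted typical cell of an isotropic great hypersphere tessellation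 of S²; the identity is equation (5.13).) -/
/-! Write `Iₘ = ∫₀^π xᵐ sin x dx`, so that `B{m+2,2} = Iₘ / m!`. Integrating by parts twice gives
`Iₘ₊₂ = π^(m+2) - (m+2)(m+1) Iₘ`, whence `Iₘ / m! = altPowSum π m + evenSign m`, and these
normalised moments `Gₘ` satisfy `Gₘ + Gₘ₊₂ = π^(m+2)/(m+2)!`. Using this to eliminate `Gₙ₋₂`, the
left-hand side becomes `1/2 + (n!/(2πⁿ)) (2 Gₙ + π Gₙ₋₁)`, and the bracket on the right is
`2 Gₙ + π Gₙ₋₁` once `k πᵏ / k!` is rewritten as `π · π^(k-1) / (k-1)!`. -/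

open intervalIntegral

open Real Finset
open scoped Nat

/-- `evenSign m = cos (m π / 2)`. -/
noncomputable def evenSign (m : ℕ) : ℝ := if Even m then (-1) ^ (m / 2) else 0

noncomputable def altPowSum (x : ℝ) (m : ℕ) : ℝ :=
  ∑ k ∈ range (m + 1), evenSign (m - k) * x ^ k / k !

lemma evenSign_add_two (m : ℕ) : evenSign (m + 2) = -evenSign m := by
  have hdiv : (m + 2) / 2 = m / 2 + 1 := by omega
  by_cases h : Even m
  · simp [evenSign, h, hdiv, pow_succ, Nat.even_add]
  · simp [evenSign, h, Nat.even_add]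

lemma evenSign_of_odd {m : ℕ} (h : Odd m) : evenSign m = 0 := by
  simp [evenSign, Nat.not_even_iff_odd.mpr h]

lemma altPowSum_add_two (x : ℝ) (m : ℕ) :
    altPowSum x (m + 2) = x ^ (m + 2) / (m + 2)! - altPowSum x m := by
  have hterm : ∀ k ∈ range (m + 1),
      evenSign (m + 2 - k) * x ^ k / k ! = -(evenSign (m - k) * x ^ k / k !) := by
    intro k hk
    rw [show m + 2 - k = m - k + 2 by have := mem_range.mp hk; omega, evenSign_add_two]
    ring
  rw [altPowSum, sum_range_succ, sum_range_succ, sum_congr rfl hterm, sum_neg_distrib,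
    altPowSum, Nat.sub_self, show m + 2 - (m + 1) = 1 by omega,
    evenSign_of_odd odd_one, show evenSign 0 = 1 by simp [evenSign]]
  ring

lemma sum_evenSign_mul_natCast_mul_pow (x : ℝ) (m : ℕ) :
    ∑ k ∈ range (m + 2), evenSign (m + 1 - k) * k * x ^ k / k ! = x * altPowSum x m := by
  rw [sum_range_succ', altPowSum, mul_sum]
  simp only [Nat.cast_zero, mul_zero, zero_mul, zero_div, add_zero]
  refine sum_congr rfl fun k _ => ?_
  rw [Nat.factorial_succ, Nat.add_sub_add_right]
  push_cast
  field_simp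
  ring

lemma integral_pow_succ_mul_sin (m : ℕ) (b : ℝ) :
    ∫ x in (0 : ℝ)..b, x ^ (m + 1) * sin x
      = -(b ^ (m + 1) * cos b) + (m + 1) * ∫ x in (0 : ℝ)..b, x ^ m * cos x := by
  have hparts := integral_mul_deriv_eq_deriv_mul (a := 0) (b := b)
    (fun x _ => by simpa using hasDerivAt_pow (m + 1) x)
    (fun x _ => by simpa using (hasDerivAt_cos x).neg)
    ((by fun_prop : Continuous fun x : ℝ => ((m : ℝ) + 1) * x ^ m).intervalIntegrable _ _)
    (continuous_sin.intervalIntegrable _ _)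
  simp [hparts, mul_assoc, integral_const_mul]

lemma integral_pow_succ_mul_cos (m : ℕ) (b : ℝ) :
    ∫ x in (0 : ℝ)..b, x ^ (m + 1) * cos x
      = b ^ (m + 1) * sin b - (m + 1) * ∫ x in (0 : ℝ)..b, x ^ m * sin x := by
  have hparts := integral_mul_deriv_eq_deriv_mul (a := 0) (b := b)
    (fun x _ => by simpa using hasDerivAt_pow (m + 1) x)
    (fun x _ => hasDerivAt_sin x)
    ((by fun_prop : Continuous fun x : ℝ => ((m : ℝ) + 1) * x ^ m).intervalIntegrable _ _)
    (continuous_cos.intervalIntegrable _ _)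
  simp [hparts, mul_assoc, integral_const_mul]

lemma integral_pow_add_two_mul_sin_pi (m : ℕ) :
    ∫ x in (0 : ℝ)..π, x ^ (m + 2) * sin x
      = π ^ (m + 2) - (m + 2) * (m + 1) * ∫ x in (0 : ℝ)..π, x ^ m * sin x := by
  rw [integral_pow_succ_mul_sin, integral_pow_succ_mul_cos, cos_pi, sin_pi]
  push_cast
  ring

/-- The antiderivative of `x^m sin x` is `-∑ⱼ m!/(m-j)! x^(m-j) cos (x + jπ/2)`; at `x = π` it
contributes the sum `altPowSum π m`, at `x = 0` only its constant term `evenSign m` survives. -/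
theorem integral_pow_mul_sin_pi (m : ℕ) :
    ∫ x in (0 : ℝ)..π, x ^ m * sin x = m ! * (altPowSum π m + evenSign m) := by
  induction m using Nat.twoStepInduction with
  | zero => norm_num [altPowSum, evenSign]
  | one =>
    have h := integral_pow_succ_mul_sin 0 π
    simp only [zero_add, pow_one, pow_zero, one_mul, integral_cos] at h
    simp [h, altPowSum, evenSign, sum_range_succ]
  | more m ih _ =>
    rw [integral_pow_add_two_mul_sin_pi, ih, altPowSum_add_two, evenSign_add_two,
      Nat.factorial_succ, Nat.factorial_succ]
    push_cast
    field_simp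
    ring

lemma ite_odd_eq_evenSign_sub_one {n : ℕ} (hn : 1 ≤ n) :
    (if Odd n then (-1 : ℝ) ^ ((n - 1) / 2) else 0) = evenSign (n - 1) := by
  obtain ⟨m, rfl⟩ := Nat.exists_eq_add_of_le' hn
  simp [evenSign, Nat.odd_add_one]

lemma sum_ite_even_mul_natCast_add_two (x : ℝ) {n : ℕ} (hn : 1 ≤ n) :
    (∑ k ∈ range (n + 1), if Even (n - k) then
        (-1 : ℝ) ^ ((n - k) / 2) * ((k : ℝ) + 2) * x ^ k / k ! else 0)
      = 2 * altPowSum x n + x * altPowSum x (n - 1) := by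
  obtain ⟨m, rfl⟩ := Nat.exists_eq_add_of_le' hn
  have hterm : ∀ k, (if Even (m + 1 - k) then
        (-1 : ℝ) ^ ((m + 1 - k) / 2) * ((k : ℝ) + 2) * x ^ k / k ! else 0)
      = 2 * (evenSign (m + 1 - k) * x ^ k / k !) + evenSign (m + 1 - k) * k * x ^ k / k ! := by
    intro k
    by_cases h : Even (m + 1 - k) <;> simp only [evenSign, h, if_true, if_false] <;> ring
  simp only [hterm, sum_add_distrib, ← mul_sum, sum_evenSign_mul_natCast_mul_pow, altPowSum,
    Nat.add_sub_cancel]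

lemma bQ_add_two_two (m : ℕ) :
    bQ (m + 2) 2 = 1 / m ! * ∫ x in (0 : ℝ)..π, x ^ m * sin x := by
  simp [bQ, mul_comm]

/-- For every integer `n ≥ 2`, the quantity
`(n!/(2π^n)) (B{n,2} + π B{n+1,2} + 3 B{n+2,2})` (the expected statistical
dimension `E δ(W̆_{n,2})`) equals
`1/2 + (n!/(2π^n)) (∑_{k ∈ {0,…,n}, n-k even} (-1)^{(n-k)/2} (k+2) π^k/k!
  + 2(-1)^{n/2} 𝟙{n even} + π (-1)^{(n-1)/2} 𝟙{n odd})`,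
and, written out via the integral definition of `B`, equals
`(n!/(2π^n)) ((1/(n-2)!) ∫₀^π x^{n-2} sin x dx + (π/(n-1)!) ∫₀^π x^{n-1} sin x dx
  + (3/n!) ∫₀^π x^n sin x dx)`. -/
theorem statdim_weighted_cell_d2 (n : ℕ) (hn : 2 ≤ n) :
    ((Nat.factorial n : ℝ) / (2 * Real.pi ^ n)) *
        (bQ n 2 + Real.pi * bQ (n + 1) 2 + 3 * bQ (n + 2) 2)
      = 1 / 2 + ((Nat.factorial n : ℝ) / (2 * Real.pi ^ n)) *
          ((∑ k ∈ Finset.range (n + 1),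
              if Even (n - k) then
                (-1 : ℝ) ^ ((n - k) / 2) * ((k : ℝ) + 2) * Real.pi ^ k / (Nat.factorial k : ℝ)
              else 0)
            + 2 * (if Even n then (-1 : ℝ) ^ (n / 2) else 0)
            + Real.pi * (if Odd n then (-1 : ℝ) ^ ((n - 1) / 2) else 0)) ∧
    ((Nat.factorial n : ℝ) / (2 * Real.pi ^ n)) *
        (bQ n 2 + Real.pi * bQ (n + 1) 2 + 3 * bQ (n + 2) 2)
      = ((Nat.factorial n : ℝ) / (2 * Real.pi ^ n)) *
          ((1 / (Nat.factorial (n - 2) : ℝ)) *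
              (∫ x in (0 : ℝ)..Real.pi, x ^ (n - 2) * Real.sin x)
            + (Real.pi / (Nat.factorial (n - 1) : ℝ)) *
              (∫ x in (0 : ℝ)..Real.pi, x ^ (n - 1) * Real.sin x)
            + (3 / (Nat.factorial n : ℝ)) *
              (∫ x in (0 : ℝ)..Real.pi, x ^ n * Real.sin x)) := by
  obtain ⟨m, rfl⟩ := Nat.exists_eq_add_of_le' hn
  have hbQ_m1 : bQ (m + 2 + 1) 2 = bQ (m + 1 + 2) 2 := rfl
  refine ⟨?_, ?_⟩
  · have hbQ (j : ℕ) : bQ (j + 2) 2 = altPowSum π j + evenSign j := by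
      rw [bQ_add_two_two, integral_pow_mul_sin_pi]
      field_simp
    have hlow : altPowSum π m + evenSign m
        = π ^ (m + 2) / (m + 2)! - (altPowSum π (m + 2) + evenSign (m + 2)) := by
      rw [altPowSum_add_two, evenSign_add_two]
      ring
    rw [sum_ite_even_mul_natCast_add_two π (by omega), ite_odd_eq_evenSign_sub_one (by omega),
      hbQ_m1, hbQ, hbQ, hbQ, hlow, show m + 2 - 1 = m + 1 by omega]
    unfold evenSign
    field_simp
    ring
  · rw [hbQ_m1, bQ_add_two_two, bQ_add_two_two, bQ_add_two_two]
    simp only [Nat.add_sub_cancel, show m + 2 - 1 = m + 1 by omega]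
    ring
end

section
/- Let d ≥ 1, k ∈ {0,1,…,d} and ℓ ∈ {0,1,…,k} be fixed integers. Then lim_{n→∞} n^ℓ · ω_{ℓ+1} · binomial(n−d+k, k−ℓ)/C(n−d+k, k) = (2√π)^ℓ · Γ(ℓ/2 + 1) · binomial(k, ℓ). (This is the first limit relation of Theorem 5.8: by Corollary 5.7, binomial(n−d+k, k−ℓ)/C(n−d+k, k) equals the expected ℓ-th spherical intrinsic volume E v_ℓ(Z_{n,d}^{(k)}) of the typical spherical k-face of a great hypersphere tessellation of S^d with n hyperspheres, and the limit equals the expected ℓ-th Euclidean intrinsic volume E V_ℓ(Z_{γ,d}^{(k)}) of the typical k-face of the stationary isotropic Poisson hyperplane tessellation of R^d with intensity γ = Γ((d+1)/2)/(√π·Γ(d/2)).) -/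
/-!
Put `m = n - d + k`, so that `m ~ n`. Then `m.choose (k - ℓ) ~ n ^ (k - ℓ) / (k - ℓ)!`, and in
the Schläfli number `C(m, k) = 2 ∑_{r ≤ k} (m - 1).choose r` the top term dominates, so
`C(m, k) ~ 2 n ^ k / k!`. The quotient therefore tends to `ω_{ℓ+1} k! / (2 (k - ℓ)!)`, and
Legendre's duplication formula `Γ((ℓ + 1) / 2) Γ(ℓ / 2 + 1) = 2 ^ (-ℓ) √π ℓ!` turns this into
`(2√π)^ℓ Γ(ℓ / 2 + 1) (k.choose ℓ)`.
-/

/-- `omegaS ℓ` is `ω_{ℓ+1} = 2 π^((ℓ+1)/2) / Γ((ℓ+1)/2)`, the ℓ-dimensional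
Hausdorff measure (surface area) of the unit sphere `S^ℓ`. -/
noncomputable def omegaS (ℓ : ℕ) : ℝ :=
  2 * Real.pi ^ (((ℓ : ℝ) + 1) / 2) / Real.Gamma (((ℓ : ℝ) + 1) / 2)

/-- The Schläfli number `C(n,d) = 2 ∑_{r=0}^{d} (n-1).choose r`. -/
def schlafliC (n d : ℕ) : ℕ :=
  2 * ∑ r ∈ Finset.range (d + 1), Nat.choose (n - 1) r

open Filter Asymptotics Real

theorem omegaS_mul_factorial (ℓ : ℕ) :
    omegaS ℓ * ℓ.factorial = 2 * (2 * √π) ^ ℓ * Gamma (ℓ / 2 + 1) := by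
  have hdup := Gamma_mul_Gamma_add_half ((ℓ + 1) / 2)
  rw [show ((ℓ : ℝ) + 1) / 2 + 1 / 2 = ℓ / 2 + 1 by ring,
    show 2 * (((ℓ : ℝ) + 1) / 2) = ℓ + 1 by ring, show (1 : ℝ) - (ℓ + 1) = -ℓ by ring,
    Gamma_nat_eq_factorial, rpow_neg zero_le_two, rpow_natCast, ← div_eq_mul_inv,
    div_mul_eq_mul_div, eq_div_iff (by positivity)] at hdup
  have hpi : π ^ (((ℓ : ℝ) + 1) / 2) = √π ^ ℓ * √π := by
    rw [sqrt_eq_rpow, ← rpow_natCast, ← rpow_mul pi_pos.le, ← rpow_add pi_pos]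
    ring_nf
  rw [omegaS, hpi, mul_pow, div_mul_eq_mul_div, div_eq_iff (Gamma_pos_of_pos (by positivity)).ne']
  linear_combination (-2 * √π ^ ℓ) * hdup

theorem isEquivalent_natCast_sub_add (a b : ℕ) :
    (fun n : ℕ => ((n - a + b : ℕ) : ℝ)) ~[atTop] (fun n => (n : ℝ)) := by
  have hshift :
      (fun n : ℕ => (n : ℝ) + ((b : ℝ) - a)) =ᶠ[atTop] fun n => ((n - a + b : ℕ) : ℝ) := by
    filter_upwards [eventually_ge_atTop a] with n hn
    push_cast [hn]
    ring
  refine (IsEquivalent.refl.add_const_of_norm_tendsto_atTop ?_).congr_left hshift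
  exact tendsto_norm_atTop_atTop.comp tendsto_natCast_atTop_atTop

theorem Asymptotics.IsEquivalent.comp_of_natCast_isEquivalent {u : ℕ → ℝ} {c : ℝ} {j : ℕ}
    (hu : u ~[atTop] fun n => c * (n : ℝ) ^ j) {f : ℕ → ℕ}
    (hf : (fun n => (f n : ℝ)) ~[atTop] fun n => (n : ℝ)) :
    (fun n => u (f n)) ~[atTop] fun n => c * (n : ℝ) ^ j := by
  have hf_atTop : Tendsto f atTop atTop :=
    tendsto_natCast_atTop_iff.mp (hf.symm.tendsto_atTop tendsto_natCast_atTop_atTop)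
  exact (hu.comp_tendsto hf_atTop).trans (IsEquivalent.refl.mul (hf.pow j))

theorem isEquivalent_choose' (j : ℕ) :
    (fun n : ℕ => (n.choose j : ℝ)) ~[atTop] fun n => (j.factorial : ℝ)⁻¹ * (n : ℝ) ^ j := by
  simpa only [div_eq_inv_mul] using isEquivalent_choose j

theorem isLittleO_const_mul_pow_natCast_atTop {r k : ℕ} (hrk : r < k) (a : ℝ) {b : ℝ}
    (hb : b ≠ 0) : (fun n : ℕ => a * (n : ℝ) ^ r) =o[atTop] fun n => b * (n : ℝ) ^ k :=
  (((isLittleO_pow_pow_atTop_of_lt hrk).comp_tendsto tendsto_natCast_atTop_atTop).const_mul_left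
    a).const_mul_right hb

theorem isEquivalent_schlafliC (k : ℕ) :
    (fun m => (schlafliC m k : ℝ)) ~[atTop] fun m => 2 / k.factorial * (m : ℝ) ^ k := by
  have hchoose (r : ℕ) : (fun m : ℕ => ((m - 1).choose r : ℝ)) ~[atTop]
      fun m => (r.factorial : ℝ)⁻¹ * (m : ℝ) ^ r :=
    (isEquivalent_choose' r).comp_of_natCast_isEquivalent
      (by simpa using isEquivalent_natCast_sub_add 1 0)
  have hlower : (fun m : ℕ => ∑ r ∈ Finset.range k, ((m - 1).choose r : ℝ))
      =o[atTop] fun m => (k.factorial : ℝ)⁻¹ * (m : ℝ) ^ k :=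
    IsLittleO.fun_sum fun r hr => (hchoose r).trans_isLittleO
      (isLittleO_const_mul_pow_natCast_atTop (Finset.mem_range.mp hr) _ (by positivity))
  have hsum := (IsEquivalent.refl (u := fun _ : ℕ => (2 : ℝ))).mul
    (hlower.add_isEquivalent (hchoose k))
  refine (hsum.congr_left (Eventually.of_forall fun m => ?_)).congr_right
    (Eventually.of_forall fun m => ?_)
  · simp [schlafliC, Finset.sum_range_succ]
  · simp only [Pi.mul_apply]
    ring

theorem typical_face_intrinsic_volume_limit_general (d k ℓ : ℕ)
    (hℓ : ℓ ≤ k) :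
    Filter.Tendsto
      (fun n : ℕ => (n : ℝ) ^ ℓ * omegaS ℓ *
        (Nat.choose (n - d + k) (k - ℓ) : ℝ) / (schlafliC (n - d + k) k : ℝ))
      Filter.atTop
      (nhds ((2 * Real.sqrt Real.pi) ^ ℓ * Real.Gamma ((ℓ : ℝ) / 2 + 1) *
        (Nat.choose k ℓ : ℝ))) := by
  have hm := isEquivalent_natCast_sub_add d k
  have hnum := (IsEquivalent.refl (u := fun n : ℕ => (n : ℝ) ^ ℓ * omegaS ℓ)).mul
    ((isEquivalent_choose' (k - ℓ)).comp_of_natCast_isEquivalent hm)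
  have hden := (isEquivalent_schlafliC k).comp_of_natCast_isEquivalent hm
  have hlead : (fun n : ℕ => omegaS ℓ * k.factorial / (2 * (k - ℓ).factorial))
      =ᶠ[atTop] fun n : ℕ => (n : ℝ) ^ ℓ * omegaS ℓ *
        (((k - ℓ).factorial : ℝ)⁻¹ * n ^ (k - ℓ)) / (2 / k.factorial * n ^ k) := by
    filter_upwards [eventually_ne_atTop 0] with n hn
    rw [← pow_mul_pow_sub _ hℓ]
    field_simp
  have hconst : omegaS ℓ * k.factorial / (2 * (k - ℓ).factorial)
      = (2 * √π) ^ ℓ * Gamma (ℓ / 2 + 1) * k.choose ℓ := by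
    rw [← Nat.choose_mul_factorial_mul_factorial hℓ, div_eq_iff (by positivity)]
    push_cast
    linear_combination (k.choose ℓ * (k - ℓ).factorial : ℝ) * omegaS_mul_factorial ℓ
  rw [← hconst]
  exact (hnum.div hden).symm.tendsto_nhds (tendsto_const_nhds.congr' hlead)

/-- First limit relation of Theorem 5.8: for fixed `d ≥ 1`, `0 ≤ k ≤ d` and
`0 ≤ ℓ ≤ k`, the rescaled expected spherical intrinsic volume
`n^ℓ ω_{ℓ+1} (n-d+k).choose (k-ℓ) / C(n-d+k, k)` of the typical spherical k-face
converges, as `n → ∞`, to `(2√π)^ℓ Γ(ℓ/2 + 1) (k.choose ℓ)`, the expected ℓ-th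
Euclidean intrinsic volume of the typical k-face of the stationary isotropic
Poisson hyperplane tessellation with intensity `γ = Γ((d+1)/2)/(√π Γ(d/2))`. -/
theorem typical_face_intrinsic_volume_limit (d k ℓ : ℕ)
    (hd : 1 ≤ d) (hk : k ≤ d) (hℓ : ℓ ≤ k) :
    Filter.Tendsto
      (fun n : ℕ => (n : ℝ) ^ ℓ * omegaS ℓ *
        (Nat.choose (n - d + k) (k - ℓ) : ℝ) / (schlafliC (n - d + k) k : ℝ))
      Filter.atTop
      (nhds ((2 * Real.sqrt Real.pi) ^ ℓ * Real.Gamma ((ℓ : ℝ) / 2 + 1) *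
        (Nat.choose k ℓ : ℝ))) :=
  typical_face_intrinsic_volume_limit_general d k ℓ hℓ
end

section
/- Let d ≥ 1, k ∈ {1,…,d} and ℓ ∈ {0,1,…,k} be fixed integers. Then lim_{n→∞} n^ℓ · ω_{ℓ+1} · ((n−d+k)!/(2π^{n−d+k})) · B{n−d+k+ℓ, k} = (2π^{3/2})^ℓ · Γ(ℓ/2 + 1)/Γ(ℓ + 1) = ω_{ℓ+1}·π^ℓ/2. (This is the analytic content of the second limit relation of Theorem 5.8: by Corollary 5.7, ((n−d+k)!/(2π^{n−d+k}))·B{n−d+k+ℓ,k}·A[k,ℓ] equals the expected ℓ-th spherical intrinsic volume E v_ℓ(W_{n,d}^{(k)}) of the weighted typical spherical k-face of an isotropic great hypersphere tessellation of S^d with n hyperspheres, where A[k,ℓ] is a constant independent of n.) -/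
open intervalIntegral

/-! On `[0, π]` we have `x (π - x) / π ≤ sin x ≤ π - x`, which squeezes
`∫₀^π sin^j x · x^M dx` between two Beta integrals
`∫₀^π x^p (π - x)^q dx = π^(p+q+1) p! q! / (p+q+1)!` whose ratio tends to `1` as `M → ∞`.
Hence `B{m,k} ~ π^m / m!` for fixed `k`, and with `N = n - d + k` the general term is
`(ω_{ℓ+1} π^ℓ / 2) · (n^ℓ N! / (N+ℓ)!) · (B{N+ℓ,k} (N+ℓ)! / π^(N+ℓ))`, whose last two factors
tend to `1`. The closed form of the limit is Legendre's duplication formula. -/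

open Real Filter Topology Finset
open scoped Nat

theorem integral_pow_mul_sub_pow (a : ℝ) (p q : ℕ) :
    ∫ x in (0 : ℝ)..a, x ^ p * (a - x) ^ q = a ^ (p + q + 1) * p ! * q ! / (p + q + 1)! := by
  induction q generalizing p with
  | zero =>
    simp only [pow_zero, mul_one, integral_pow, add_zero, Nat.factorial_succ]
    push_cast
    field_simp
    ring
  | succ q ih =>
    -- integrate `x ^ p` and differentiate `(a - x) ^ (q + 1)`; both boundary terms vanish
    have hp : (p : ℝ) + 1 ≠ 0 := by positivity
    have hu : ∀ x ∈ Set.uIcc 0 a, HasDerivAt (fun x => (a - x) ^ (q + 1))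
        (-((q + 1 : ℝ) * (a - x) ^ q)) x := fun x _ => by
      simpa using ((hasDerivAt_id x).const_sub a).fun_pow (q + 1)
    have hv : ∀ x ∈ Set.uIcc 0 a, HasDerivAt (fun x : ℝ => x ^ (p + 1) / (p + 1)) (x ^ p) x :=
      fun x _ => by simpa [hp] using (hasDerivAt_pow (p + 1) x).div_const ((p : ℝ) + 1)
    have hparts := integral_mul_deriv_eq_deriv_mul hu hv
      (Continuous.intervalIntegrable (by fun_prop) _ _)
      (Continuous.intervalIntegrable (by fun_prop) _ _)
    simp only [sub_self, zero_pow (Nat.succ_ne_zero _), zero_mul, zero_div, mul_zero, sub_zero,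
      zero_sub] at hparts
    calc ∫ x in (0 : ℝ)..a, x ^ p * (a - x) ^ (q + 1)
        = (q + 1) / (p + 1) * ∫ x in (0 : ℝ)..a, x ^ (p + 1) * (a - x) ^ q := by
          simp_rw [mul_comm (_ ^ p), hparts, ← integral_neg, ← integral_const_mul]
          congr 1 with x
          field_simp
      _ = a ^ (p + (q + 1) + 1) * p ! * (q + 1)! / (p + (q + 1) + 1)! := by
          rw [ih, show p + 1 + q + 1 = p + (q + 1) + 1 by ring, Nat.factorial_succ p,
            Nat.factorial_succ q]
          push_cast
          field_simp

theorem sin_le_pi_sub {x : ℝ} (hx : x ≤ π) : sin x ≤ π - x := by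
  simpa using sin_le (sub_nonneg.2 hx)

theorem mul_pi_sub_div_pi_le_sin {x : ℝ} (hx₀ : 0 ≤ x) (hxπ : x ≤ π) :
    x * (π - x) / π ≤ sin x := by
  -- both sides are symmetric under `x ↦ π - x`;
  -- on `[0, π/2]` use `x - x³/6 ≤ sin x` and `π² < 12`
  wlog hx : x ≤ π / 2 generalizing x
  · simpa [mul_comm] using this (sub_nonneg.2 hxπ) (by linarith) (by linarith)
  have hπ := pi_gt_three
  have hπ' := pi_lt_d2
  have hcube := sin_ge_sub_cube hx₀
  rw [div_le_iff₀ pi_pos]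
  nlinarith [mul_nonneg (mul_nonneg hx₀ hx₀) (by nlinarith : 0 ≤ 6 - π * x)]

theorem integral_sin_pow_mul_pow_le_s10 (j M : ℕ) :
    ∫ x in (0 : ℝ)..π, sin x ^ j * x ^ M ≤ π ^ (M + j + 1) * M ! * j ! / (M + j + 1)! := by
  rw [← integral_pow_mul_sub_pow]
  refine integral_mono_on pi_pos.le (Continuous.intervalIntegrable (by fun_prop) _ _)
    (Continuous.intervalIntegrable (by fun_prop) _ _) fun x hx => ?_
  rw [mul_comm]
  have hsin := pow_le_pow_left₀ (sin_nonneg_of_nonneg_of_le_pi hx.1 hx.2) (sin_le_pi_sub hx.2) j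
  exact mul_le_mul_of_nonneg_left hsin (pow_nonneg hx.1 M)

theorem le_integral_sin_pow_mul_pow (j M : ℕ) :
    π ^ (M + j + 1) * (M + j)! * j ! / (M + j + j + 1)! ≤
      ∫ x in (0 : ℝ)..π, sin x ^ j * x ^ M := by
  calc π ^ (M + j + 1) * (M + j)! * j ! / (M + j + j + 1)!
      = (∫ x in (0 : ℝ)..π, x ^ (M + j) * (π - x) ^ j) / π ^ j := by
        rw [integral_pow_mul_sub_pow, show M + j + j + 1 = M + j + 1 + j by ring, pow_add]
        field_simp
        ring
    _ = ∫ x in (0 : ℝ)..π, (x * (π - x) / π) ^ j * x ^ M := by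
        rw [← integral_div]
        congr 1 with x
        rw [div_pow, mul_pow, pow_add]
        ring
    _ ≤ ∫ x in (0 : ℝ)..π, sin x ^ j * x ^ M := by
        refine integral_mono_on pi_pos.le (Continuous.intervalIntegrable (by fun_prop) _ _)
          (Continuous.intervalIntegrable (by fun_prop) _ _) fun x hx => ?_
        have hlow : 0 ≤ x * (π - x) / π :=
          div_nonneg (mul_nonneg hx.1 (sub_nonneg.2 hx.2)) pi_pos.le
        have hsin := pow_le_pow_left₀ hlow (mul_pi_sub_div_pi_le_sin hx.1 hx.2) j
        exact mul_le_mul_of_nonneg_right hsin (pow_nonneg hx.1 M)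

theorem factorial_add_eq_factorial_mul_prod (N c : ℕ) :
    ((N + c)! : ℝ) = N ! * ∏ i ∈ range c, ((N : ℝ) + (i + 1)) := by
  rw [← Nat.factorial_mul_ascFactorial, Nat.ascFactorial_eq_prod_range]
  push_cast
  congr 1
  exact prod_congr rfl fun i _ => by ring

theorem tendsto_natCast_add_pow_mul_factorial_div_factorial (a : ℝ) (b c : ℕ) :
    Tendsto (fun p : ℕ => ((p : ℝ) + a) ^ c * (p + b)! / (p + b + c)!) atTop (𝓝 1) := by
  have hfactor (i : ℕ) :
      Tendsto (fun p : ℕ => ((p : ℝ) + a) / (p + (b + (i + 1)))) atTop (𝓝 1) := by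
    simpa [add_comm] using
      tendsto_add_mul_div_add_mul_atTop_nhds a (b + (i + 1) : ℝ) 1 one_ne_zero
  convert tendsto_finsetProd (range c) fun i _ => hfactor i using 1
  · funext p
    rw [factorial_add_eq_factorial_mul_prod (p + b), prod_div_distrib, prod_const, card_range]
    push_cast
    field_simp
    simp_rw [add_assoc]
  · simp

theorem tendsto_bQ_mul_factorial_div_pow (k : ℕ) :
    Tendsto (fun m => bQ m k * m ! / π ^ m) atTop (𝓝 1) := by
  rcases k with _ | j
  · refine tendsto_const_nhds.congr fun m => ?_
    simp only [bQ, if_pos]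
    field_simp
  rw [← tendsto_add_atTop_iff_nat (j + 1)]
  set betaInt : ℕ → ℝ := fun M => π ^ (M + j + 1) * M ! * j ! / (M + j + 1)!
  have hbeta (M : ℕ) : 0 < betaInt M := by positivity
  have hbQ (M : ℕ) : bQ (M + (j + 1)) (j + 1) * (M + (j + 1))! / π ^ (M + (j + 1)) =
      (∫ x in (0 : ℝ)..π, sin x ^ j * x ^ M) / betaInt M := by
    simp only [bQ, betaInt, Nat.add_sub_cancel, le_add_self, if_pos, Nat.succ_ne_zero, if_false]
    rw [← add_assoc]
    field_simp
  have hlower (M : ℕ) : ((M + 1 : ℝ) ^ j * (M + (j + 1))! / (M + (j + 1) + j)!) /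
      ((M + 1 : ℝ) ^ j * M ! / (M + j)!) ≤
      (∫ x in (0 : ℝ)..π, sin x ^ j * x ^ M) / betaInt M := by
    refine le_of_eq_of_le ?_
      (div_le_div_of_nonneg_right (le_integral_sin_pow_mul_pow j M) (hbeta M).le)
    rw [← add_assoc, show M + j + 1 + j = M + j + j + 1 by ring]
    simp only [betaInt]
    field_simp
  have hupper (M : ℕ) : (∫ x in (0 : ℝ)..π, sin x ^ j * x ^ M) / betaInt M ≤ 1 :=
    (div_le_one (hbeta M)).2 (integral_sin_pow_mul_pow_le_s10 j M)
  have hlim := (tendsto_natCast_add_pow_mul_factorial_div_factorial 1 (j + 1) j).div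
    (tendsto_natCast_add_pow_mul_factorial_div_factorial 1 0 j) one_ne_zero
  simp only [add_zero, div_one] at hlim
  simp_rw [hbQ]
  exact tendsto_of_tendsto_of_tendsto_of_le_of_le hlim tendsto_const_nhds hlower hupper

theorem two_mul_pi_rpow_pow_mul_Gamma_div_Gamma (ℓ : ℕ) :
    (2 * π ^ ((3 : ℝ) / 2)) ^ ℓ * Gamma (ℓ / 2 + 1) / Gamma (ℓ + 1) = omegaS ℓ * π ^ ℓ / 2 := by
  have hΓ : Gamma ((ℓ + 1) / 2) ≠ 0 := (Gamma_pos_of_pos (by positivity)).ne'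
  have hΓ' : Gamma (ℓ + 1) ≠ 0 := (Gamma_pos_of_pos (by positivity)).ne'
  have hdup := Gamma_mul_Gamma_add_half ((ℓ + 1) / 2)
  rw [show ((ℓ : ℝ) + 1) / 2 + 1 / 2 = ℓ / 2 + 1 by ring,
    show 2 * (((ℓ : ℝ) + 1) / 2) = ℓ + 1 by ring, show 1 - ((ℓ : ℝ) + 1) = -ℓ by ring,
    rpow_neg zero_le_two, rpow_natCast] at hdup
  have hpow : (π ^ ((3 : ℝ) / 2)) ^ ℓ * √π = π ^ (((ℓ : ℝ) + 1) / 2) * π ^ ℓ := by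
    rw [← rpow_natCast, ← rpow_mul pi_pos.le, sqrt_eq_rpow, ← rpow_natCast π ℓ,
      ← rpow_add pi_pos, ← rpow_add pi_pos]
    ring_nf
  rw [omegaS]
  field_simp at hdup ⊢
  linear_combination (π ^ ((3 : ℝ) / 2)) ^ ℓ * hdup + Gamma (ℓ + 1) * hpow

theorem weighted_face_intrinsic_volume_limit_general (d k ℓ : ℕ) :
    Filter.Tendsto
      (fun n : ℕ => (n : ℝ) ^ ℓ * omegaS ℓ *
        ((Nat.factorial (n - d + k) : ℝ) / (2 * Real.pi ^ (n - d + k))) *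
        bQ (n - d + k + ℓ) k)
      Filter.atTop
      (nhds ((2 * Real.pi ^ ((3 : ℝ) / 2)) ^ ℓ * Real.Gamma ((ℓ : ℝ) / 2 + 1) /
        Real.Gamma ((ℓ : ℝ) + 1))) ∧
    (2 * Real.pi ^ ((3 : ℝ) / 2)) ^ ℓ * Real.Gamma ((ℓ : ℝ) / 2 + 1) / Real.Gamma ((ℓ : ℝ) + 1)
      = omegaS ℓ * Real.pi ^ ℓ / 2 := by
  rw [two_mul_pi_rpow_pow_mul_Gamma_div_Gamma]
  refine ⟨?_, rfl⟩
  rw [← tendsto_add_atTop_iff_nat d]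
  have hfactorials := tendsto_natCast_add_pow_mul_factorial_div_factorial d k ℓ
  have hbQ := (tendsto_bQ_mul_factorial_div_pow k).comp (tendsto_add_atTop_nat (k + ℓ))
  convert (hfactorials.mul hbQ).const_mul (omegaS ℓ * π ^ ℓ / 2) using 1
  · funext p
    simp only [Function.comp_apply, Nat.add_sub_cancel, ← add_assoc]
    push_cast
    rw [pow_add π (p + k)]
    field_simp
  · simp

/-- Analytic content of the second limit relation of Theorem 5.8: for fixed
`d ≥ 1`, `1 ≤ k ≤ d` and `0 ≤ ℓ ≤ k`,
`n^ℓ ω_{ℓ+1} ((n-d+k)!/(2π^{n-d+k})) B{n-d+k+ℓ, k}` converges, as `n → ∞`, to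
`(2π^{3/2})^ℓ Γ(ℓ/2 + 1)/Γ(ℓ + 1)`, which equals `ω_{ℓ+1} π^ℓ / 2`. -/
theorem weighted_face_intrinsic_volume_limit (d k ℓ : ℕ)
    (hd : 1 ≤ d) (hk1 : 1 ≤ k) (hk : k ≤ d) (hℓ : ℓ ≤ k) :
    Filter.Tendsto
      (fun n : ℕ => (n : ℝ) ^ ℓ * omegaS ℓ *
        ((Nat.factorial (n - d + k) : ℝ) / (2 * Real.pi ^ (n - d + k))) *
        bQ (n - d + k + ℓ) k)
      Filter.atTop
      (nhds ((2 * Real.pi ^ ((3 : ℝ) / 2)) ^ ℓ * Real.Gamma ((ℓ : ℝ) / 2 + 1) /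
        Real.Gamma ((ℓ : ℝ) + 1))) ∧
    (2 * Real.pi ^ ((3 : ℝ) / 2)) ^ ℓ * Real.Gamma ((ℓ : ℝ) / 2 + 1) / Real.Gamma ((ℓ : ℝ) + 1)
      = omegaS ℓ * Real.pi ^ ℓ / 2 :=
  weighted_face_intrinsic_volume_limit_general d k ℓ
end
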